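/- arXiv:1304.0693 — 3 statements merged into one kernel-verified Lean document; each statement's English description precedes it below -/
import Mathlib

section
/- Let ℓ be an odd positive integer with 3^s exactly dividing ℓ. Then for every positive integer k, ∑_{d | 3k+2} (d/3) d^{2ℓ} ≡ 0 (mod 3^{s+1}). -/
/-!
Every divisor `d` of `n = 3k + 2` is prime to `3`, and `φ(3^(s+1)) = 2·3^s` divides `2ℓ`, so
`d^(2ℓ) ≡ 1 (mod 3^(s+1))` by Euler's theorem. Hence the sum is congruent to `∑_{d ∣ n} (d/3)`,
which vanishes because `(d/3) = -((n/d)/3)` when `(n/3) = -1`.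
-/

/-- The Legendre symbol modulo 3. -/
def leg3 (d : ℕ) : ℤ := if d % 3 = 1 then 1 else if d % 3 = 2 then -1 else 0

lemma leg3_add_leg3_eq_zero_of_leg3_mul {a b : ℕ} (h : leg3 (a * b) = -1) :
    leg3 a + leg3 b = 0 := by
  unfold leg3 at *
  rw [Nat.mul_mod] at h
  have ha := Nat.mod_lt a (show 3 > 0 by norm_num)
  have hb := Nat.mod_lt b (show 3 > 0 by norm_num)
  interval_cases a % 3 <;> interval_cases b % 3 <;> simp_all

lemma sum_divisors_leg3_eq_zero {n : ℕ} (hn : leg3 n = -1) :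
    ∑ d ∈ n.divisors, leg3 d = 0 := by
  have hpair : ∀ d ∈ n.divisors, leg3 d + leg3 (n / d) = 0 := fun d hd =>
    leg3_add_leg3_eq_zero_of_leg3_mul (by rwa [Nat.mul_div_cancel' (Nat.dvd_of_mem_divisors hd)])
  have htwice : 2 * ∑ d ∈ n.divisors, leg3 d = 0 := by
    rw [two_mul]
    nth_rewrite 2 [← Nat.sum_div_divisors]
    rw [← Finset.sum_add_distrib]
    exact Finset.sum_eq_zero hpair
  omega

lemma leg3_three_mul_add_two (k : ℕ) : leg3 (3 * k + 2) = -1 := by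
  simp [leg3, Nat.add_mod]

lemma Int.natCast_dvd_pow_sub_one_of_totient_dvd {a n m : ℕ} (ha : a.Coprime n)
    (hm : Nat.totient n ∣ m) : (n : ℤ) ∣ (a : ℤ) ^ m - 1 := by
  obtain ⟨c, rfl⟩ := hm
  have h : a ^ (Nat.totient n * c) ≡ 1 [MOD n] := by
    simpa [← pow_mul] using (Nat.ModEq.pow_totient ha).pow c
  exact_mod_cast (Int.natCast_modEq_iff.mpr h).symm.dvd

lemma totient_three_pow_succ_dvd {s ℓ : ℕ} (h : 3 ^ s ∣ ℓ) : Nat.totient (3 ^ (s + 1)) ∣ 2 * ℓ := by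
  rw [Nat.totient_prime_pow_succ Nat.prime_three, mul_comm]
  exact Nat.mul_dvd_mul_left 2 h

theorem stmt6_general (ℓ s : ℕ)
    (h1 : 3 ^ s ∣ ℓ) (k : ℕ) :
    (3 ^ (s + 1) : ℤ) ∣ ∑ d ∈ (3 * k + 2).divisors, leg3 d * (d : ℤ) ^ (2 * ℓ) := by
  have hcop : (3 * k + 2).Coprime (3 ^ (s + 1)) := by
    refine Nat.Coprime.pow_right _ ?_
    simp [Nat.Coprime, Nat.gcd_comm]
  have hterm : ∀ d ∈ (3 * k + 2).divisors,
      (3 ^ (s + 1) : ℤ) ∣ leg3 d * (d : ℤ) ^ (2 * ℓ) - leg3 d := fun d hd => by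
    rw [← mul_sub_one]
    refine Dvd.dvd.mul_left ?_ _
    exact_mod_cast Int.natCast_dvd_pow_sub_one_of_totient_dvd
      (hcop.coprime_dvd_left (Nat.dvd_of_mem_divisors hd)) (totient_three_pow_succ_dvd h1)
  have hsum := Finset.dvd_sum hterm
  rwa [Finset.sum_sub_distrib, sum_divisors_leg3_eq_zero (leg3_three_mul_add_two k),
    sub_zero] at hsum

/-- If `ℓ` is odd with `3^s ∥ ℓ`, then `∑_{d ∣ 3k+2} (d/3) d^{2ℓ} ≡ 0 (mod 3^{s+1})`. -/
theorem stmt6 (ℓ s : ℕ) (hℓ : Odd ℓ) (hℓ0 : 0 < ℓ)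
    (h1 : 3 ^ s ∣ ℓ) (h2 : ¬ 3 ^ (s + 1) ∣ ℓ) (k : ℕ) (hk : 0 < k) :
    (3 ^ (s + 1) : ℤ) ∣ ∑ d ∈ (3 * k + 2).divisors, leg3 d * (d : ℤ) ^ (2 * ℓ) :=
  stmt6_general ℓ s h1 k
end

section
/- Let ℓ be an odd positive integer with 3^s exactly dividing ℓ. Then for every positive integer k, ∑_{d | 3k+2} d^ℓ ≡ 0 (mod 3^{s+1}). -/
/-!
Pair each divisor `d` of `n = 3k + 2` with `n / d`. Since `d * (n / d) ≡ -1 (mod 3)`, the pair satisfies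
`d ≡ -(n / d) (mod 3)`; lifting the exponent gives `3^(s+1) ∣ d^(3^s) + (n / d)^(3^s)`, and this divides
`d^ℓ + (n / d)^ℓ` because `ℓ / 3^s` is odd. Summing over the pairs shows `3^(s+1)` divides twice the sum.
-/

theorem pow_succ_dvd_pow_add_pow_of_dvd_add {R : Type*} [CommRing R] {p : ℕ} (hp : Odd p)
    {a b : R} (hab : (p : R) ∣ a + b) {s ℓ : ℕ} (hℓ : Odd ℓ) (hsℓ : p ^ s ∣ ℓ) :
    (p : R) ^ (s + 1) ∣ a ^ ℓ + b ^ ℓ := by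
  obtain ⟨m, rfl⟩ := hsℓ
  have hlift := dvd_sub_pow_of_dvd_sub (a := a) (b := -b) (by rwa [sub_neg_eq_add]) s
  rw [(hp.pow : Odd (p ^ s)).neg_pow, sub_neg_eq_add] at hlift
  simpa only [pow_mul] using hlift.trans (Odd.add_dvd_pow_add_pow _ _ (Nat.Odd.of_mul_right hℓ))

theorem three_dvd_add_of_mul_mod_three_eq_two {d e : ℕ} (h : d * e % 3 = 2) : 3 ∣ d + e := by
  rw [← ZMod.natCast_eq_zero_iff]
  have hde : ((d * e : ℕ) : ZMod 3) = 2 := by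
    rw [← ZMod.natCast_mod, h]; rfl
  push_cast at hde ⊢
  generalize (d : ZMod 3) = x at hde ⊢
  generalize (e : ZMod 3) = y at hde ⊢
  revert x y; decide

theorem dvd_sum_divisors_of_dvd_add_div {m n : ℕ} (hm : Odd m) (f : ℕ → ℕ)
    (hf : ∀ d ∈ n.divisors, m ∣ f d + f (n / d)) : m ∣ ∑ d ∈ n.divisors, f d := by
  have htwice : 2 * ∑ d ∈ n.divisors, f d = ∑ d ∈ n.divisors, (f d + f (n / d)) := by
    rw [Finset.sum_add_distrib, Nat.sum_div_divisors n f, two_mul]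
  exact Nat.Coprime.dvd_of_dvd_mul_left (Nat.coprime_two_left.mpr hm).symm
    (htwice ▸ Finset.dvd_sum hf)

theorem stmt8_general (ℓ s : ℕ) (hℓ : Odd ℓ)
    (h1 : 3 ^ s ∣ ℓ) (k : ℕ) :
    3 ^ (s + 1) ∣ ∑ d ∈ (3 * k + 2).divisors, d ^ ℓ := by
  refine dvd_sum_divisors_of_dvd_add_div (by decide : Odd 3).pow _ fun d hd => ?_
  have h3 : 3 ∣ d + (3 * k + 2) / d := by
    apply three_dvd_add_of_mul_mod_three_eq_two
    rw [Nat.mul_div_cancel' (Nat.dvd_of_mem_divisors hd)]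
    omega
  have h3' : ((3 : ℕ) : ℤ) ∣ (d : ℤ) + ((3 * k + 2) / d : ℕ) := by exact_mod_cast h3
  exact_mod_cast pow_succ_dvd_pow_add_pow_of_dvd_add (by decide) h3' hℓ h1

/-- If `ℓ` is odd with `3^s ∥ ℓ`, then `∑_{d ∣ 3k+2} d^ℓ ≡ 0 (mod 3^{s+1})`. -/
theorem stmt8 (ℓ s : ℕ) (hℓ : Odd ℓ) (hℓ0 : 0 < ℓ)
    (h1 : 3 ^ s ∣ ℓ) (h2 : ¬ 3 ^ (s + 1) ∣ ℓ) (k : ℕ) (hk : 0 < k) :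
    3 ^ (s + 1) ∣ ∑ d ∈ (3 * k + 2).divisors, d ^ ℓ :=
  stmt8_general ℓ s hℓ h1 k
end

section
/- The Borwein cubic theta functions satisfy a(q)^3 = b(q)^3 + c(q)^3 for |q|<1. -/
open Complex in
/-- Borwein's cubic theta function `a(q) = ∑ q^{n²+nm+m²}`. -/
noncomputable def borA (q : ℂ) : ℂ :=
  ∑' p : ℤ × ℤ, q ^ (p.1 ^ 2 + p.1 * p.2 + p.2 ^ 2)

open Complex in
/-- Borwein's cubic theta function `b(q) = ∑ ω^{n-m} q^{n²+nm+m²}`, `ω = e^{2πi/3}`. -/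
noncomputable def borB (q : ℂ) : ℂ :=
  ∑' p : ℤ × ℤ,
    Complex.exp (2 * Real.pi * Complex.I / 3) ^ (p.1 - p.2) *
      q ^ (p.1 ^ 2 + p.1 * p.2 + p.2 ^ 2)

open Complex in
/-- Borwein's cubic theta function `c(q) = ∑ q^{(n+1/3)²+(n+1/3)(m+1/3)+(m+1/3)²}`. -/
noncomputable def borC (q : ℂ) : ℂ :=
  ∑' p : ℤ × ℤ,
    q ^ ((((p.1 : ℂ) + 1 / 3) ^ 2 + ((p.1 : ℂ) + 1 / 3) * ((p.2 : ℂ) + 1 / 3) +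
      ((p.2 : ℂ) + 1 / 3) ^ 2))

/-!
Cubing the series gives theta series over triples `z ∈ (ℤ²)³`: `a³ = ∑ q^{Q₃ z}`,
`b³ = ∑ ω^{cls₃ z} q^{Q₃ z}` and `c³ = q ∑ q^{J₃ z}`, where `Q(n, m) = n² + nm + m²`,
`cls(n, m) = n - m`, and `J = Q + n + m` comes from the exponent `J + 1/3` of `c`. Since `z ↦ -z`
preserves `Q₃` and negates `cls₃`, and `1 + ω + ω² = 0`, `a³ - b³` is `3 ∑ q^{Q₃ z}` over the
triples with `cls₃ z ≡ 1 (mod 3)`.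

View `ℤ²` as the Eisenstein integers, `rot` being multiplication by a cube root of unity `ρ`. The
discrete Fourier transform `(z₁, z₂, z₃) ↦ (z₁+z₂+z₃, z₁+ρz₂+ρ²z₃, z₁+ρ²z₂+ρz₃)` multiplies `Q₃`
by 3; followed by the rotations `ρᵏ` (`k = 0, 1, 2`) of the first component, it maps three copies
of `{cls₃ z ≡ 1}` bijectively onto the triples all of whose components have `cls ≡ 1`. Those are
the images of `ψ(n, m) = (2n+m+1, m-n)` applied componentwise, and `Q ∘ ψ = 3J + 1`, so comparing
exponents gives `3 ∑_{cls₃ z ≡ 1} q^{Q₃ z} = q ∑ q^{J₃ w}`.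
-/

theorem Function.Odd.tsum_eq_zero {α G : Type*} [InvolutiveNeg α] [AddCommGroup G]
    [IsAddTorsionFree G] [TopologicalSpace G] [IsTopologicalAddGroup G] [T2Space G]
    {f : α → G} (hf : f.Odd) : ∑' x, f x = 0 :=
  self_eq_neg.mp <| calc
    ∑' x, f x = ∑' x, f (-x) := ((Equiv.neg α).tsum_eq f).symm
    _ = ∑' x, -f x := tsum_congr hf
    _ = -∑' x, f x := tsum_neg

theorem tsum_pow_three_of_summable_norm {ι R : Type*} [NormedRing R] [CompleteSpace R]
    {f : ι → R} (hf : Summable fun i => ‖f i‖) :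
    (∑' i, f i) ^ 3 = ∑' x : ι × ι × ι, f x.1 * (f x.2.1 * f x.2.2) := by
  rw [pow_three, tsum_mul_tsum_of_summable_norm hf hf,
    tsum_mul_tsum_of_summable_norm hf (hf.mul_norm hf)]

theorem summable_pow_natAbs {r : ℝ} (h0 : 0 ≤ r) (h1 : r < 1) :
    Summable fun n : ℤ => r ^ n.natAbs :=
  .of_nat_of_neg (by simpa using summable_geometric_of_lt_one h0 h1)
    (by simpa using summable_geometric_of_lt_one h0 h1)

theorem summable_norm_zpow_of_natAbs_le {𝕜 : Type*} [NormedDivisionRing 𝕜] {q : 𝕜}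
    (hq0 : q ≠ 0) (hq : ‖q‖ < 1) {L : ℤ × ℤ → ℤ} (c : ℤ)
    (hL : ∀ p : ℤ × ℤ, ((p.1.natAbs + p.2.natAbs : ℕ) : ℤ) ≤ L p + c) :
    Summable fun p => ‖q ^ L p‖ := by
  have hr : 0 < ‖q‖ := norm_pos_iff.2 hq0
  have hmaj := ((summable_pow_natAbs hr.le hq).mul_of_nonneg (summable_pow_natAbs hr.le hq)
    (fun _ => by positivity) (fun _ => by positivity)).mul_left (‖q‖ ^ (-c))
  refine hmaj.of_nonneg_of_le (fun _ => norm_nonneg _) fun p => ?_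
  calc ‖q ^ L p‖ = ‖q‖ ^ L p := norm_zpow _ _
    _ ≤ ‖q‖ ^ (-c + (p.1.natAbs + p.2.natAbs : ℕ)) :=
        zpow_le_zpow_right_of_le_one₀ hr hq.le (by linarith [hL p])
    _ = ‖q‖ ^ (-c) * (‖q‖ ^ p.1.natAbs * ‖q‖ ^ p.2.natAbs) := by
        rw [zpow_add₀ hr.ne', zpow_natCast, pow_add]

theorem zpow_eq_zpow_emod₀ {G₀ : Type*} [GroupWithZero G₀] {x : G₀} (m : ℤ) {n : ℕ}
    (hn : n ≠ 0) (h : x ^ n = 1) : x ^ m = x ^ (m % n) := by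
  have hx : x ≠ 0 := by rintro rfl; simp [zero_pow hn] at h
  conv_lhs => rw [← Int.emod_add_mul_ediv m n]
  rw [zpow_add₀ hx, zpow_mul, zpow_natCast, h, one_zpow, mul_one]

namespace BorweinCubic

noncomputable def ω : ℂ := Complex.exp (2 * Real.pi * Complex.I / 3)

theorem isPrimitiveRoot_ω : IsPrimitiveRoot ω 3 := by
  simpa [ω] using Complex.isPrimitiveRoot_exp 3 three_ne_zero

theorem norm_ω : ‖ω‖ = 1 :=
  Complex.norm_eq_one_of_pow_eq_one isPrimitiveRoot_ω.pow_eq_one three_ne_zero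

theorem one_add_ω_add_ω_sq : 1 + ω + ω ^ 2 = 0 := by
  simpa [Finset.sum_range_succ] using isPrimitiveRoot_ω.geom_sum_eq_zero (by norm_num)

theorem odd_one_sub_ω_zpow_sub_ite :
    Function.Odd fun s : ℤ => 1 - ω ^ s - 3 * if s % 3 = 1 then (1 : ℂ) else 0 := by
  intro s
  have hω (m : ℤ) : ω ^ m = ω ^ (m % 3) :=
    zpow_eq_zpow_emod₀ m three_ne_zero isPrimitiveRoot_ω.pow_eq_one
  dsimp only
  rw [hω s, hω (-s)]
  rcases (by omega : s % 3 = 0 ∨ s % 3 = 1 ∨ s % 3 = 2) with h | h | h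
  · rw [h, show -s % 3 = 0 by omega]
    simp
  · rw [h, show -s % 3 = 2 by omega, if_pos rfl, if_neg (by norm_num), zpow_one, zpow_two]
    linear_combination -one_add_ω_add_ω_sq
  · rw [h, show -s % 3 = 1 by omega, if_pos rfl, if_neg (by norm_num), zpow_one, zpow_two]
    linear_combination -one_add_ω_add_ω_sq

def Q (p : ℤ × ℤ) : ℤ := p.1 ^ 2 + p.1 * p.2 + p.2 ^ 2

def J (p : ℤ × ℤ) : ℤ := Q p + p.1 + p.2

def cls (p : ℤ × ℤ) : ℤ := p.1 - p.2

abbrev Triple := (ℤ × ℤ) × (ℤ × ℤ) × (ℤ × ℤ)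

def map3 (f : ℤ × ℤ → ℤ × ℤ) (z : Triple) : Triple := (f z.1, f z.2.1, f z.2.2)

def Q3 (z : Triple) : ℤ := Q z.1 + Q z.2.1 + Q z.2.2

def J3 (w : Triple) : ℤ := J w.1 + J w.2.1 + J w.2.2

def cls3 (z : Triple) : ℤ := cls z.1 + cls z.2.1 + cls z.2.2

def sumClassOne : Set Triple := {z | cls3 z % 3 = 1}

def allClassOne : Set Triple := {u | cls u.1 % 3 = 1 ∧ cls u.2.1 % 3 = 1 ∧ cls u.2.2 % 3 = 1}

theorem Q_eq_zero_iff {p : ℤ × ℤ} : Q p = 0 ↔ p = 0 := by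
  refine ⟨fun h => ?_, fun h => by simp [h, Q]⟩
  have hsum : p.1 ^ 2 + p.2 ^ 2 + (p.1 + p.2) ^ 2 = 0 := by
    unfold Q at h; linear_combination 2 * h
  have h1 : p.1 = 0 := by nlinarith [sq_nonneg p.2, sq_nonneg (p.1 + p.2)]
  have h2 : p.2 = 0 := by nlinarith [sq_nonneg p.1, sq_nonneg (p.1 + p.2)]
  exact Prod.ext h1 h2

theorem natAbs_add_natAbs_le_Q (p : ℤ × ℤ) : ((p.1.natAbs + p.2.natAbs : ℕ) : ℤ) ≤ Q p + 1 := by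
  push_cast [Int.natCast_natAbs]
  unfold Q
  nlinarith [sq_abs p.1, sq_abs p.2, sq_nonneg (|p.1| - 1), sq_nonneg (|p.2| - 1),
    sq_nonneg (p.1 + p.2)]

theorem natAbs_add_natAbs_le_J (p : ℤ × ℤ) : ((p.1.natAbs + p.2.natAbs : ℕ) : ℤ) ≤ J p + 1 := by
  push_cast [Int.natCast_natAbs]
  have : 2 * (|p.1| + |p.2|) ≤ 2 * J p + 3 := by
    unfold J Q
    nlinarith [sq_abs p.1, sq_abs p.2, sq_nonneg (|p.1| - 1), sq_nonneg (|p.2| - 1),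
      sq_nonneg (p.1 + p.2 + 1)]
  omega

theorem Q3_neg (z : Triple) : Q3 (-z) = Q3 z := by
  simp only [Q3, Q, Prod.fst_neg, Prod.snd_neg]; ring

theorem cls3_neg (z : Triple) : cls3 (-z) = -cls3 z := by
  simp only [cls3, cls, Prod.fst_neg, Prod.snd_neg]; ring

def psi (p : ℤ × ℤ) : ℤ × ℤ := (2 * p.1 + p.2 + 1, p.2 - p.1)

def chi (u : ℤ × ℤ) : ℤ × ℤ := ((u.1 - u.2 - 1) / 3, (u.1 + 2 * u.2 - 1) / 3)

theorem Q_psi (p : ℤ × ℤ) : Q (psi p) = 3 * J p + 1 := by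
  simp only [Q, J, psi]; ring

theorem cls_psi (p : ℤ × ℤ) : cls (psi p) % 3 = 1 := by
  simp only [cls, psi]; omega

theorem chi_psi (p : ℤ × ℤ) : chi (psi p) = p := by
  simp only [chi, psi, Prod.ext_iff]; omega

theorem psi_chi {u : ℤ × ℤ} (hu : cls u % 3 = 1) : psi (chi u) = u := by
  simp only [cls] at hu
  simp only [chi, psi, Prod.ext_iff]; omega

def rot (p : ℤ × ℤ) : ℤ × ℤ := (-p.1 - p.2, p.1)

def dft (z : Triple) : Triple :=
  (z.1 + z.2.1 + z.2.2, z.1 + rot z.2.1 + rot (rot z.2.2), z.1 + rot (rot z.2.1) + rot z.2.2)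

def rotPow : Fin 3 → ℤ × ℤ → ℤ × ℤ
  | 0 => id
  | 1 => rot
  | 2 => rot ∘ rot

def fourierMap (x : Fin 3 × Triple) : Triple := (rotPow x.1 (dft x.2).1, (dft x.2).2)

-- For `cls₃ z ≡ 1`, the second coordinates of `fourierMap (k, z)` add up to `k` modulo 3.
def fourierIndex (u : Triple) : Fin 3 := ⟨((u.1.2 + u.2.1.2 + u.2.2.2) % 3).toNat, by omega⟩

def divThree (p : ℤ × ℤ) : ℤ × ℤ := (p.1 / 3, p.2 / 3)

def dftInv (v : Triple) : Triple :=
  (divThree (v.1 + v.2.1 + v.2.2), divThree (v.1 + rot (rot v.2.1) + rot v.2.2),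
    divThree (v.1 + rot v.2.1 + rot (rot v.2.2)))

-- `rot` has order 3, so applying `rotPow k` twice undoes it.
def fourierMapInv (u : Triple) : Fin 3 × Triple :=
  (fourierIndex u, dftInv (rotPow (fourierIndex u) (rotPow (fourierIndex u) u.1), u.2))

theorem Q3_fourierMap (x : Fin 3 × Triple) : Q3 (fourierMap x) = 3 * Q3 x.2 := by
  obtain ⟨k, ⟨a, b⟩, ⟨c, d⟩, e, f⟩ := x
  fin_cases k <;>
    simp only [Q3, Q, fourierMap, rotPow, dft, rot, Prod.mk_add_mk, Function.comp_apply,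
      id_eq] <;> ring

theorem fourierMap_mem {x : Fin 3 × Triple} (hx : x.2 ∈ sumClassOne) :
    fourierMap x ∈ allClassOne := by
  obtain ⟨k, ⟨a, b⟩, ⟨c, d⟩, e, f⟩ := x
  simp only [sumClassOne, cls3, cls, Set.mem_ofPred_eq] at hx
  fin_cases k <;>
    simp only [allClassOne, cls, Set.mem_ofPred_eq, fourierMap, rotPow, dft, rot,
      Prod.mk_add_mk, Function.comp_apply, id_eq] <;> omega

theorem fourierIndex_fourierMap {x : Fin 3 × Triple} (hx : x.2 ∈ sumClassOne) :
    fourierIndex (fourierMap x) = x.1 := by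
  obtain ⟨k, ⟨a, b⟩, ⟨c, d⟩, e, f⟩ := x
  simp only [sumClassOne, cls3, cls, Set.mem_ofPred_eq] at hx
  fin_cases k <;>
    simp only [fourierIndex, Fin.ext_iff, fourierMap, rotPow, dft, rot, Prod.mk_add_mk,
      Function.comp_apply, id_eq] <;> omega

theorem fourierMapInv_fourierMap {x : Fin 3 × Triple} (hx : x.2 ∈ sumClassOne) :
    fourierMapInv (fourierMap x) = x := by
  have hk := fourierIndex_fourierMap hx
  obtain ⟨k, ⟨a, b⟩, ⟨c, d⟩, e, f⟩ := x
  rw [fourierMapInv, hk]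
  fin_cases k <;>
    simp only [dftInv, divThree, Prod.mk.injEq, true_and, fourierMap, rotPow, dft, rot,
      Prod.mk_add_mk, Function.comp_apply, id_eq] <;> omega

theorem fourierMap_fourierMapInv {u : Triple} (hu : u ∈ allClassOne) :
    fourierMap (fourierMapInv u) = u ∧ (fourierMapInv u).2 ∈ sumClassOne := by
  obtain ⟨⟨a, b⟩, ⟨c, d⟩, e, f⟩ := u
  simp only [allClassOne, cls, Set.mem_ofPred_eq] at hu
  obtain ⟨k, hk⟩ : ∃ k, fourierIndex ((a, b), (c, d), e, f) = k := ⟨_, rfl⟩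
  have hkv : ((b + d + f) % 3).toNat = k.val := congrArg Fin.val hk
  rw [fourierMapInv, hk]
  fin_cases k <;>
    simp only [dftInv, divThree, Prod.mk.injEq, sumClassOne, cls3, cls, Set.mem_ofPred_eq,
      fourierMap, rotPow, dft, rot, Prod.mk_add_mk, Function.comp_apply, id_eq] at hkv ⊢ <;> omega

theorem map3_psi_mem (w : Triple) : map3 psi w ∈ allClassOne :=
  ⟨cls_psi _, cls_psi _, cls_psi _⟩

theorem map3_chi_map3_psi (w : Triple) : map3 chi (map3 psi w) = w := by
  simp [map3, chi_psi]

theorem map3_psi_map3_chi {u : Triple} (hu : u ∈ allClassOne) : map3 psi (map3 chi u) = u := by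
  obtain ⟨h1, h2, h3⟩ := hu
  simp [map3, psi_chi, h1, h2, h3]

theorem Q3_map3_psi (w : Triple) : Q3 (map3 psi w) = 3 * J3 w + 3 := by
  simp only [Q3, J3, map3, Q_psi]; ring

def latticeEquiv : Fin 3 × sumClassOne ≃ Triple where
  toFun x := map3 chi (fourierMap (x.1, x.2))
  invFun w :=
    ((fourierMapInv (map3 psi w)).1, ⟨_, (fourierMap_fourierMapInv (map3_psi_mem w)).2⟩)
  left_inv := by
    rintro ⟨k, z, hz⟩
    have h := fourierMapInv_fourierMap (x := (k, z)) hz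
    simp only [map3_psi_map3_chi (fourierMap_mem (x := (k, z)) hz), h]
  right_inv w := by
    simp [(fourierMap_fourierMapInv (map3_psi_mem w)).1, map3_chi_map3_psi]

theorem Q3_eq_J3_latticeEquiv (x : Fin 3 × sumClassOne) :
    Q3 x.2 = J3 (latticeEquiv x) + 1 := by
  have h := Q3_fourierMap (x.1, x.2)
  dsimp only at h
  rw [← map3_psi_map3_chi (fourierMap_mem x.2.2), Q3_map3_psi] at h
  simp only [latticeEquiv, Equiv.coe_fn_mk]
  omega

section Sums

variable {q : ℂ}

theorem summable_norm_zpow_Q (hq0 : q ≠ 0) (hq : ‖q‖ < 1) : Summable fun p => ‖q ^ Q p‖ :=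
  summable_norm_zpow_of_natAbs_le hq0 hq 1 natAbs_add_natAbs_le_Q

theorem summable_norm_zpow_J (hq0 : q ≠ 0) (hq : ‖q‖ < 1) : Summable fun p => ‖q ^ J p‖ :=
  summable_norm_zpow_of_natAbs_le hq0 hq 1 natAbs_add_natAbs_le_J

theorem summable_norm_zpow_Q3 (hq0 : q ≠ 0) (hq : ‖q‖ < 1) : Summable fun z => ‖q ^ Q3 z‖ := by
  have hQ := summable_norm_zpow_Q hq0 hq
  refine (hQ.mul_norm (hQ.mul_norm hQ)).congr fun z => ?_
  simp only [Q3, zpow_add₀ hq0, mul_assoc]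

theorem borA_pow_three (hq0 : q ≠ 0) (hq : ‖q‖ < 1) : borA q ^ 3 = ∑' z, q ^ Q3 z := by
  change (∑' p, q ^ Q p) ^ 3 = _
  rw [tsum_pow_three_of_summable_norm (summable_norm_zpow_Q hq0 hq)]
  simp only [Q3, zpow_add₀ hq0, mul_assoc]

theorem borB_pow_three (hq0 : q ≠ 0) (hq : ‖q‖ < 1) :
    borB q ^ 3 = ∑' z, ω ^ cls3 z * q ^ Q3 z := by
  change (∑' p, ω ^ cls p * q ^ Q p) ^ 3 = _
  have hB : Summable fun p => ‖ω ^ cls p * q ^ Q p‖ := by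
    simpa [norm_ω] using summable_norm_zpow_Q hq0 hq
  rw [tsum_pow_three_of_summable_norm hB]
  refine tsum_congr fun z => ?_
  simp only [cls3, Q3, zpow_add₀ hq0, zpow_add₀ (isPrimitiveRoot_ω.ne_zero three_ne_zero)]
  ring

theorem borA_pow_three_sub_borB_pow_three (hq0 : q ≠ 0) (hq : ‖q‖ < 1) :
    borA q ^ 3 - borB q ^ 3 = 3 * ∑' z, sumClassOne.indicator (q ^ Q3 ·) z := by
  have hA := (summable_norm_zpow_Q3 hq0 hq).of_norm
  have hB : Summable fun z => ω ^ cls3 z * q ^ Q3 z :=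
    (summable_norm_zpow_Q3 hq0 hq).of_norm_bounded fun z => by simp [norm_ω]
  have hodd : Function.Odd fun z : Triple =>
      (1 - ω ^ cls3 z - 3 * if cls3 z % 3 = 1 then (1 : ℂ) else 0) * q ^ Q3 z := by
    intro z
    have h := odd_one_sub_ω_zpow_sub_ite (cls3 z)
    dsimp only at h ⊢
    rw [cls3_neg, Q3_neg, h, neg_mul]
  rw [borA_pow_three hq0 hq, borB_pow_three hq0 hq, ← hA.tsum_sub hB, ← tsum_mul_left,
    ← sub_eq_zero, ← (hA.sub hB).tsum_sub ((hA.indicator _).mul_left 3), ← hodd.tsum_eq_zero]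
  refine tsum_congr fun z => ?_
  simp only [Set.indicator_apply, sumClassOne, Set.mem_ofPred_eq]
  split_ifs <;> ring

theorem borC_exponent (p : ℤ × ℤ) :
    ((p.1 : ℂ) + 1 / 3) ^ 2 + ((p.1 : ℂ) + 1 / 3) * ((p.2 : ℂ) + 1 / 3) +
      ((p.2 : ℂ) + 1 / 3) ^ 2 = 1 / 3 + (J p : ℂ) := by
  push_cast [J, Q]; ring

theorem borC_eq (hq0 : q ≠ 0) : borC q = q ^ (1 / 3 : ℂ) * ∑' p, q ^ J p := by
  rw [borC, ← tsum_mul_left]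
  exact tsum_congr fun p => by rw [borC_exponent, Complex.cpow_add _ _ hq0, Complex.cpow_intCast]

theorem borC_pow_three (hq0 : q ≠ 0) (hq : ‖q‖ < 1) : borC q ^ 3 = q * ∑' w, q ^ J3 w := by
  rw [borC_eq hq0, mul_pow, one_div, Complex.cpow_ofNat_inv_pow,
    tsum_pow_three_of_summable_norm (summable_norm_zpow_J hq0 hq)]
  simp only [J3, zpow_add₀ hq0, mul_assoc]

theorem three_mul_tsum_indicator_sumClassOne (hq0 : q ≠ 0) (hq : ‖q‖ < 1) :
    3 * ∑' z, sumClassOne.indicator (q ^ Q3 ·) z = q * ∑' w, q ^ J3 w := by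
  have hS : Summable fun z : sumClassOne => ‖q ^ Q3 z‖ :=
    (summable_norm_zpow_Q3 hq0 hq).subtype _
  calc 3 * ∑' z, sumClassOne.indicator (q ^ Q3 ·) z
      = (∑' _ : Fin 3, (1 : ℂ)) * ∑' z : sumClassOne, q ^ Q3 z := by
        rw [tsum_subtype sumClassOne (q ^ Q3 ·)]; simp
    _ = ∑' x : Fin 3 × sumClassOne, q ^ Q3 x.2 := by
        rw [tsum_mul_tsum_of_summable_norm .of_finite hS]; simp
    _ = ∑' x, q * q ^ J3 (latticeEquiv x) :=
        tsum_congr fun x => by rw [Q3_eq_J3_latticeEquiv, zpow_add_one₀ hq0, mul_comm]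
    _ = q * ∑' w, q ^ J3 w := by rw [tsum_mul_left, latticeEquiv.tsum_eq (q ^ J3 ·)]

end Sums

theorem borA_zero : borA 0 = 1 := by
  rw [borA, tsum_eq_single 0 fun p hp => zero_zpow _ (mt Q_eq_zero_iff.mp hp)]
  simp

theorem borB_zero : borB 0 = 1 := by
  rw [borB, tsum_eq_single 0 fun p hp => by
    rw [show p.1 ^ 2 + p.1 * p.2 + p.2 ^ 2 = Q p from rfl,
      zero_zpow _ (mt Q_eq_zero_iff.mp hp), mul_zero]]
  simp

theorem borC_zero : borC 0 = 0 := by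
  rw [borC]
  refine (tsum_congr fun p => ?_).trans tsum_zero
  rw [borC_exponent, Complex.zero_cpow]
  intro h
  have : ((3 * J p + 1 : ℤ) : ℂ) = 0 := by push_cast; linear_combination 3 * h
  have : 3 * J p + 1 = 0 := by exact_mod_cast this
  omega

end BorweinCubic

/-- Borwein's identity `a(q)³ = b(q)³ + c(q)³`. -/
theorem stmt10 (q : ℂ) (hq : ‖q‖ < 1) :
    borA q ^ 3 = borB q ^ 3 + borC q ^ 3 := by
  open BorweinCubic in
  rcases eq_or_ne q 0 with rfl | hq0
  · simp [borA_zero, borB_zero, borC_zero]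
  · rw [← sub_eq_iff_eq_add', borA_pow_three_sub_borB_pow_three hq0 hq,
      three_mul_tsum_indicator_sumClassOne hq0 hq, borC_pow_three hq0 hq]
end
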